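/- Let G be a finite simple graph and I a maximum critical independent set with X = I ∪ N(I). If diadem(G) = corona(G), then α(G[X^c]) = 0, i.e., X^c = ∅ and G is König-Egerváry. -/

import Mathlib

/-!
Let `X = I ∪ N(I)`. Criticality of `I` gives Hall's condition from `N(I)` into `I`. Two
consequences: first, for a critical independent `J`, supermodularity of `d` makes `I ∪ J` critical,
and discarding `J ∩ N(I)` (Hall) keeps `I ∪ (J \ X)` critical independent, so maximality of `I`
forces `J ⊆ X`; hence `diadem(G) ⊆ X`. Second, a maximum independent set `S` can be exchanged for
the maximum independent set `(S \ N(I)) ∪ I`, which must leave `X` when `Xᶜ ≠ ∅`; hence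
`corona(G) ⊄ X` unless `X = V`. Once `X = V`, Hall matches `N(I)` into `I`, so
`α + μ ≥ |I| + |N(I)| = |V|`, while `α + μ ≤ |V|` holds in every graph.
-/

open Set

variable {V : Type*} [Fintype V]

/-- `S` is an independent set in `G`: no two of its vertices are adjacent. -/
def IsIndep (G : SimpleGraph V) (S : Set V) : Prop :=
  ∀ u ∈ S, ∀ v ∈ S, ¬ G.Adj u v

/-- The neighborhood `N(X)` of a set of vertices. -/
def nbhd (G : SimpleGraph V) (X : Set V) : Set V := {v | ∃ u ∈ X, G.Adj u v}

/-- The difference `d(X) = |X| - |N(X)|` computed in the induced subgraph `G[W]`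
(neighborhoods are intersected with `W`). -/
noncomputable def dOn (G : SimpleGraph V) (W X : Set V) : ℤ :=
  (X.ncard : ℤ) - ((nbhd G X ∩ W).ncard : ℤ)

/-- The difference `d(X) = |X| - |N(X)|` in `G`. -/
noncomputable def dG (G : SimpleGraph V) (X : Set V) : ℤ := dOn G Set.univ X

/-- `S` is a critical independent set of the induced subgraph `G[W]`:
it is an independent subset of `W` whose difference attains
`max {d(Y) : Y ⊆ W}` (the critical difference of `G[W]`). -/
def IsCritIndepOn (G : SimpleGraph V) (W S : Set V) : Prop :=
  S ⊆ W ∧ IsIndep G S ∧ ∀ Y ⊆ W, dOn G W Y ≤ dOn G W S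

/-- `S` is a critical independent set of `G`. -/
def IsCritIndep (G : SimpleGraph V) (S : Set V) : Prop := IsCritIndepOn G Set.univ S

/-- A maximum critical independent set of `G[W]`: a critical independent set of
largest cardinality. -/
def IsMaxCritIndepOn (G : SimpleGraph V) (W S : Set V) : Prop :=
  IsCritIndepOn G W S ∧ ∀ T, IsCritIndepOn G W T → T.ncard ≤ S.ncard

/-- A maximum critical independent set of `G`. -/
def IsMaxCritIndep (G : SimpleGraph V) (S : Set V) : Prop := IsMaxCritIndepOn G Set.univ S

/-- A maximum independent set of the induced subgraph `G[W]`. -/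
def IsMaxIndepOn (G : SimpleGraph V) (W S : Set V) : Prop :=
  S ⊆ W ∧ IsIndep G S ∧ ∀ T ⊆ W, IsIndep G T → T.ncard ≤ S.ncard

/-- A maximum independent set of `G`. -/
def IsMaxIndep (G : SimpleGraph V) (S : Set V) : Prop := IsMaxIndepOn G Set.univ S

/-- The independence number of the induced subgraph `G[W]`. -/
noncomputable def alphaOn (G : SimpleGraph V) (W : Set V) : ℕ :=
  sSup {n | ∃ S ⊆ W, IsIndep G S ∧ S.ncard = n}

/-- The independence number `α(G)`. -/
noncomputable def alpha (G : SimpleGraph V) : ℕ := alphaOn G Set.univ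

/-- The maximum matching number `μ(G)`. -/
noncomputable def mu (G : SimpleGraph V) : ℕ :=
  sSup {n | ∃ M : G.Subgraph, M.IsMatching ∧ M.edgeSet.ncard = n}

/-- `G` is a König-Egerváry graph: `α(G) + μ(G) = |V(G)|`. -/
def IsKE (G : SimpleGraph V) : Prop := alpha G + mu G = Fintype.card V

/-- `nucleus(G[W])`: intersection of all maximum critical independent sets of `G[W]`. -/
def nucleusOn (G : SimpleGraph V) (W : Set V) : Set V := ⋂₀ {S | IsMaxCritIndepOn G W S}

/-- `nucleus(G)`. -/
def nucleus (G : SimpleGraph V) : Set V := nucleusOn G Set.univ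

/-- `diadem(G[W])`: union of all maximum critical independent sets of `G[W]`. -/
def diademOn (G : SimpleGraph V) (W : Set V) : Set V := ⋃₀ {S | IsMaxCritIndepOn G W S}

/-- `diadem(G)`. -/
def diadem (G : SimpleGraph V) : Set V := diademOn G Set.univ

/-- `ker(G)`: intersection of all critical independent sets of `G`. -/
def kerG (G : SimpleGraph V) : Set V := ⋂₀ {S | IsCritIndep G S}

/-- `core(G)`: intersection of all maximum independent sets of `G`. -/
def core (G : SimpleGraph V) : Set V := ⋂₀ {S | IsMaxIndep G S}

/-- `corona(G)`: union of all maximum independent sets of `G`. -/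
def corona (G : SimpleGraph V) : Set V := ⋃₀ {S | IsMaxIndep G S}

section Neighborhood

variable {W : Type*} {G : SimpleGraph W} {S T : Set W}

lemma nbhd_mono (h : S ⊆ T) : nbhd G S ⊆ nbhd G T :=
  fun _ ⟨u, hu, huv⟩ ↦ ⟨u, h hu, huv⟩

lemma nbhd_union : nbhd G (S ∪ T) = nbhd G S ∪ nbhd G T := by
  ext v
  simp only [nbhd, mem_union, mem_ofPred_eq, or_and_right, exists_or]

lemma disjoint_nbhd_comm : Disjoint S (nbhd G T) ↔ Disjoint T (nbhd G S) := by
  suffices ∀ {S T : Set W}, Disjoint S (nbhd G T) → Disjoint T (nbhd G S) from ⟨this, this⟩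
  intro S T h
  rw [disjoint_left] at h ⊢
  rintro t ht ⟨s, hs, hst⟩
  exact h hs ⟨t, ht, hst.symm⟩

lemma disjoint_nbhd_sdiff_union_nbhd (S T : Set W) :
    Disjoint S (nbhd G (T \ (S ∪ nbhd G S))) :=
  disjoint_nbhd_comm.1 (disjoint_sdiff_left.mono_right subset_union_right)

lemma isIndep_singleton (v : W) : IsIndep G {v} := by
  rintro _ rfl _ rfl
  exact G.irrefl

lemma IsIndep.mono (hT : IsIndep G T) (h : S ⊆ T) : IsIndep G S :=
  fun u hu v hv ↦ hT u (h hu) v (h hv)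

lemma IsIndep.disjoint_nbhd (hS : IsIndep G S) : Disjoint S (nbhd G S) :=
  disjoint_left.2 fun v hv ⟨u, hu, huv⟩ ↦ hS u hu v hv huv

lemma IsIndep.union (hS : IsIndep G S) (hT : IsIndep G T) (h : Disjoint S (nbhd G T)) :
    IsIndep G (S ∪ T) := by
  rintro u (hu | hu) v (hv | hv) huv
  · exact hS u hu v hv huv
  · exact disjoint_left.1 h hu ⟨v, hv, huv.symm⟩
  · exact disjoint_left.1 h hv ⟨u, hu, huv⟩
  · exact hT u hu v hv huv

end Neighborhood

section Critical

variable {W : Type*} {G : SimpleGraph W} {I S T : Set W}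

lemma dG_eq (G : SimpleGraph W) (S : Set W) :
    dG G S = (S.ncard : ℤ) - (nbhd G S).ncard := by
  simp [dG, dOn]

def IsCritical (G : SimpleGraph W) (S : Set W) : Prop := ∀ Y, dG G Y ≤ dG G S

lemma isCritIndep_iff : IsCritIndep G S ↔ IsIndep G S ∧ IsCritical G S := by
  simp [IsCritIndep, IsCritIndepOn, IsCritical, dG]

variable [Finite W]

lemma dG_add_dG_le_dG_union_add_dG_inter (G : SimpleGraph W) (S T : Set W) :
    dG G S + dG G T ≤ dG G (S ∪ T) + dG G (S ∩ T) := by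
  have hcard := ncard_union_add_ncard_inter S T
  have hnbhd := ncard_union_add_ncard_inter (nbhd G S) (nbhd G T)
  have hinter : (nbhd G (S ∩ T)).ncard ≤ (nbhd G S ∩ nbhd G T).ncard :=
    ncard_le_ncard (subset_inter (nbhd_mono inter_subset_left) (nbhd_mono inter_subset_right))
  simp only [dG_eq, nbhd_union]
  omega

/-- Hall's condition for matching `N(I)` into `I`: the neighbourhood of `I \ N(T)` misses `T`. -/
lemma IsCritical.ncard_le_ncard_nbhd_inter (hI : IsCritical G I) (hT : T ⊆ nbhd G I) :
    T.ncard ≤ (nbhd G T ∩ I).ncard := by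
  have hsub : nbhd G (I \ nbhd G T) ⊆ nbhd G I \ T := by
    rintro v ⟨u, ⟨huI, huT⟩, huv⟩
    exact ⟨⟨u, huI, huv⟩, fun hvT ↦ huT ⟨v, hvT, huv.symm⟩⟩
  have hle := hI (I \ nbhd G T)
  have hsplit := ncard_inter_add_ncard_sdiff_eq_ncard I (nbhd G T)
  have hdiff := ncard_sdiff_add_ncard_of_subset hT
  have hN := ncard_le_ncard hsub
  rw [inter_comm] at hsplit
  simp only [dG_eq] at hle
  omega

end Critical

section Matching

open SimpleGraph

variable {W : Type*} [Finite W] {G : SimpleGraph W} {M : G.Subgraph} {A B : Set W}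

lemma SimpleGraph.Subgraph.IsMatching.ncard_edgeSet_le (hM : M.IsMatching)
    (hB : ∀ ⦃a b⦄, M.Adj a b → a ∈ B ∨ b ∈ B) : M.edgeSet.ncard ≤ B.ncard := by
  have hsurj : Function.Surjective fun v : ↥(B ∩ M.verts) ↦ hM.toEdge ⟨v, v.2.2⟩ := by
    rintro ⟨e, he⟩
    induction e using Sym2.ind with
    | _ a b =>
      rcases hB he with ha | hb
      · exact ⟨⟨a, ha, he.fst_mem⟩, hM.toEdge_eq_of_adj he⟩
      · exact ⟨⟨b, hb, he.snd_mem⟩,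
          (hM.toEdge_eq_toEdge_of_adj he).symm.trans (hM.toEdge_eq_of_adj he)⟩
  calc M.edgeSet.ncard ≤ (B ∩ M.verts).ncard := Nat.card_le_card_of_surjective _ hsurj
    _ ≤ B.ncard := ncard_le_ncard inter_subset_left

lemma SimpleGraph.Subgraph.IsMatching.ncard_le_ncard_edgeSet (hM : M.IsMatching)
    (hAM : A ⊆ M.verts) (hA : ∀ a ∈ A, ∀ b ∈ A, ¬ M.Adj a b) : A.ncard ≤ M.edgeSet.ncard := by
  refine Nat.card_le_card_of_injective (fun a : A ↦ hM.toEdge ⟨a, hAM a.2⟩) fun a b hab ↦ ?_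
  obtain ⟨w, haw, -⟩ := hM (hAM a.2)
  have hb := hM.mem_coe_toEdge (hAM b.2)
  rw [← show hM.toEdge ⟨a, hAM a.2⟩ = hM.toEdge ⟨b, hAM b.2⟩ from hab,
    hM.toEdge_eq_of_adj haw, Sym2.mem_iff] at hb
  rcases hb with hb | rfl
  · exact Subtype.ext hb.symm
  · exact absurd haw (hA a a.2 b b.2)

lemma exists_isMatching_of_forall_ncard_le (hB : IsIndep G B) (hAB : Disjoint A B)
    (hall : ∀ T ⊆ A, T.ncard ≤ (nbhd G T ∩ B).ncard) :
    ∃ M : G.Subgraph, M.IsMatching ∧ A.ncard ≤ M.edgeSet.ncard := by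
  classical
  have := Fintype.ofFinite W
  obtain ⟨f, hf, hfB⟩ := (Fintype.all_card_le_filter_rel_iff_exists_injective
    fun (a : A) b ↦ b ∈ B ∧ G.Adj a b).1 fun s ↦ by
      have h := hall (Subtype.val '' (s : Set A)) (by simp)
      rw [ncard_image_of_injective _ Subtype.val_injective, ncard_coe_finset] at h
      refine h.trans_eq ?_
      rw [← ncard_coe_finset]
      congr 1
      ext b
      simp only [nbhd, Finset.coe_filter, mem_inter_iff, mem_ofPred_eq, mem_image]
      aesop
  obtain ⟨M, hMverts, hM⟩ := Subgraph.IsMatching.exists_of_disjoint_sets_of_equiv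
    (hAB.mono_right (range_subset_iff.2 fun a ↦ (hfB a).1)) (Equiv.ofInjective f hf)
    fun a ↦ (hfB a).2
  refine ⟨M, hM, ?_⟩
  calc A.ncard = (range f).ncard := (ncard_range_of_injective hf).symm
    _ ≤ M.edgeSet.ncard := by
      refine hM.ncard_le_ncard_edgeSet (hMverts ▸ subset_union_right) ?_
      rintro _ ⟨a, rfl⟩ _ ⟨b, rfl⟩ hab
      exact hB _ (hfB a).1 _ (hfB b).1 (M.adj_sub hab)

end Matching

section IndependenceNumber

variable {W : Type*} {G : SimpleGraph W} {S : Set W}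

lemma alphaOn_empty (G : SimpleGraph W) : alphaOn G ∅ = 0 := by
  have : {n | ∃ S ⊆ (∅ : Set W), IsIndep G S ∧ S.ncard = n} = {0} := by
    ext n
    simp only [subset_empty_iff, exists_eq_left, ncard_empty, mem_ofPred_eq, mem_singleton_iff]
    exact ⟨fun h ↦ h.2.symm, fun h ↦ ⟨fun _ h' ↦ h'.elim, h.symm⟩⟩
  rw [alphaOn, this, csSup_singleton]

variable [Finite W]

lemma bddAbove_indep_ncard (G : SimpleGraph W) :
    BddAbove {n | ∃ S ⊆ (univ : Set W), IsIndep G S ∧ S.ncard = n} :=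
  ⟨Nat.card W, by rintro _ ⟨S, -, -, rfl⟩; exact ncard_le_card S⟩

lemma IsIndep.ncard_le_alpha (hS : IsIndep G S) : S.ncard ≤ alpha G :=
  le_csSup (bddAbove_indep_ncard G) ⟨S, subset_univ S, hS, rfl⟩

lemma exists_isIndep_ncard_eq_alpha (G : SimpleGraph W) :
    ∃ S, IsIndep G S ∧ S.ncard = alpha G := by
  have hne : {n | ∃ S ⊆ (univ : Set W), IsIndep G S ∧ S.ncard = n}.Nonempty :=
    ⟨0, ∅, empty_subset _, fun _ h ↦ h.elim, ncard_empty W⟩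
  obtain ⟨S, -, hS, hcard⟩ := Nat.sSup_mem hne (bddAbove_indep_ncard G)
  exact ⟨S, hS, hcard⟩

lemma IsIndep.isMaxIndep_of_alpha_le (hS : IsIndep G S) (h : alpha G ≤ S.ncard) :
    IsMaxIndep G S :=
  ⟨subset_univ S, hS, fun _ _ hT ↦ hT.ncard_le_alpha.trans h⟩

end IndependenceNumber

section KoenigEgervary

open SimpleGraph

variable {W : Type*} {G : SimpleGraph W} {M : G.Subgraph}

lemma mu_nonempty (G : SimpleGraph W) :
    {n | ∃ M : G.Subgraph, M.IsMatching ∧ M.edgeSet.ncard = n}.Nonempty :=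
  ⟨_, ⊥, fun _ h ↦ h.elim, rfl⟩

variable [Finite W]

lemma SimpleGraph.Subgraph.IsMatching.ncard_edgeSet_le_mu (hM : M.IsMatching) :
    M.edgeSet.ncard ≤ mu G := by
  refine le_csSup ⟨Nat.card W, ?_⟩ ⟨M, hM, rfl⟩
  rintro _ ⟨M', hM', rfl⟩
  exact (hM'.ncard_edgeSet_le (B := univ) fun _ _ _ ↦ Or.inl trivial).trans (ncard_univ W).le

lemma alpha_add_mu_le (G : SimpleGraph W) : alpha G + mu G ≤ Nat.card W := by
  obtain ⟨S, hS, hcard⟩ := exists_isIndep_ncard_eq_alpha G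
  have hmu : mu G ≤ Sᶜ.ncard := by
    refine csSup_le (mu_nonempty G) ?_
    rintro _ ⟨M, hM, rfl⟩
    refine hM.ncard_edgeSet_le fun a b hab ↦ ?_
    rw [mem_compl_iff, mem_compl_iff, ← not_and_or]
    exact fun h ↦ hS a h.1 b h.2 (M.adj_sub hab)
  rw [← hcard, ← ncard_add_ncard_compl S]
  omega

end KoenigEgervary

lemma isKE_of_union_nbhd_eq_univ {W : Type*} [Fintype W] {G : SimpleGraph W} {I : Set W}
    (hI : IsIndep G I) (hIc : IsCritical G I) (hcover : I ∪ nbhd G I = univ) : IsKE G := by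
  obtain ⟨M, hM, hcard⟩ := exists_isMatching_of_forall_ncard_le hI hI.disjoint_nbhd.symm
    fun _ hT ↦ hIc.ncard_le_ncard_nbhd_inter hT
  refine le_antisymm ((alpha_add_mu_le G).trans_eq Nat.card_eq_fintype_card) ?_
  calc Fintype.card W = I.ncard + (nbhd G I).ncard := by
        rw [← ncard_union_eq hI.disjoint_nbhd, hcover, ncard_univ, Nat.card_eq_fintype_card]
    _ ≤ alpha G + mu G := add_le_add hI.ncard_le_alpha (hcard.trans hM.ncard_edgeSet_le_mu)

section CriticalStructure

variable {W : Type*} [Finite W] {G : SimpleGraph W} {I J : Set W}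

/-- The Butenko–Trukhanov exchange: swapping `S ∩ N(I)` for `I \ S` does not shrink `S`. -/
lemma exists_isMaxIndep_superset_of_isCritical (hI : IsIndep G I) (hIc : IsCritical G I) :
    ∃ S, IsMaxIndep G S ∧ I ⊆ S := by
  obtain ⟨S, hS, hcard⟩ := exists_isIndep_ncard_eq_alpha G
  refine ⟨(S \ nbhd G I) ∪ I, ?_, subset_union_right⟩
  refine ((hS.mono sdiff_subset).union hI disjoint_sdiff_left).isMaxIndep_of_alpha_le ?_
  have hswap : (S ∩ nbhd G I).ncard ≤ (I \ S).ncard := by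
    refine (hIc.ncard_le_ncard_nbhd_inter inter_subset_right).trans (ncard_le_ncard ?_)
    rintro v ⟨⟨u, ⟨huS, -⟩, huv⟩, hvI⟩
    exact ⟨hvI, fun hvS ↦ hS u huS v hvS huv⟩
  have hinter : (S \ nbhd G I) ∩ I = S ∩ I := by
    rw [← inter_sdiff_right_comm, (hI.disjoint_nbhd.mono_left inter_subset_right).sdiff_eq_left]
  have h1 := ncard_union_add_ncard_inter (S \ nbhd G I) I
  have h2 := ncard_inter_add_ncard_sdiff_eq_ncard I S
  have h3 := ncard_inter_add_ncard_sdiff_eq_ncard S (nbhd G I)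
  rw [hinter, inter_comm] at h1
  omega

/-- `I ∪ J` is covered by `I ∪ Q` and `T = J ∩ N(I)`, and by Hall `T` brings at least `|T|`
new neighbours, all in `I`. -/
lemma IsCritical.dG_union_le (hI : IsIndep G I) (hIc : IsCritical G I) (J : Set W) :
    dG G (I ∪ J) ≤ dG G (I ∪ (J \ (I ∪ nbhd G I))) := by
  set Q := J \ (I ∪ nbhd G I)
  set T := J ∩ nbhd G I
  have hcover : I ∪ J ⊆ (I ∪ Q) ∪ T := by
    intro x
    simp only [Q, T, mem_union, mem_sdiff, mem_inter_iff]
    tauto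
  have hdisj : Disjoint (nbhd G (I ∪ Q)) (nbhd G T ∩ I) := by
    rw [nbhd_union]
    exact disjoint_union_left.2 ⟨hI.disjoint_nbhd.symm.mono_right inter_subset_right,
      (disjoint_nbhd_sdiff_union_nbhd I J).symm.mono_right inter_subset_right⟩
  have hN : nbhd G (I ∪ Q) ∪ (nbhd G T ∩ I) ⊆ nbhd G (I ∪ J) :=
    union_subset (nbhd_mono (union_subset_union_right _ sdiff_subset))
      (inter_subset_left.trans (nbhd_mono (inter_subset_left.trans subset_union_right)))
  have hall := hIc.ncard_le_ncard_nbhd_inter (T := T) inter_subset_right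
  have hcard := (ncard_le_ncard hcover).trans (ncard_union_le _ _)
  have hnbhd := ncard_le_ncard hN
  rw [ncard_union_eq hdisj] at hnbhd
  simp only [dG_eq]
  omega

lemma IsMaxCritIndep.subset_union_nbhd (hI : IsMaxCritIndep G I) (hJ : IsCritIndep G J) :
    J ⊆ I ∪ nbhd G I := by
  obtain ⟨hIi, hIc⟩ := isCritIndep_iff.1 hI.1
  obtain ⟨hJi, hJc⟩ := isCritIndep_iff.1 hJ
  set Q := J \ (I ∪ nbhd G I)
  have hQcrit : IsCritIndep G (I ∪ Q) := by
    refine isCritIndep_iff.2 ⟨hIi.union (hJi.mono sdiff_subset)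
      (disjoint_nbhd_sdiff_union_nbhd I J), fun Y ↦ (hIc Y).trans ?_⟩
    have := dG_add_dG_le_dG_union_add_dG_inter G I J
    have := hJc (I ∩ J)
    have := hIc.dG_union_le hIi J
    linarith
  have hle := hI.2 _ hQcrit
  rw [ncard_union_eq (disjoint_sdiff_right.mono_left subset_union_left)] at hle
  rw [← sdiff_eq_empty, ← ncard_eq_zero]
  omega

lemma union_nbhd_eq_univ_of_corona_subset (hI : IsIndep G I) (hIc : IsCritical G I)
    (h : corona G ⊆ I ∪ nbhd G I) : I ∪ nbhd G I = univ := by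
  obtain ⟨S, hS, hIS⟩ := exists_isMaxIndep_superset_of_isCritical hI hIc
  have hSI : S ⊆ I := fun x hx ↦ (h ⟨S, hS, hx⟩).resolve_right
    fun hxN ↦ disjoint_left.1 hS.2.1.disjoint_nbhd hx (nbhd_mono hIS hxN)
  refine eq_univ_of_forall fun v ↦ by_contra fun hv ↦ ?_
  rw [mem_union, not_or] at hv
  have hle := hS.2.2 _ (subset_univ _)
    ((isIndep_singleton v).union hI (disjoint_singleton_left.2 hv.2))
  rw [ncard_union_eq (disjoint_singleton_left.2 hv.1), ncard_singleton] at hle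
  have := ncard_le_ncard hSI
  omega

end CriticalStructure

/-- If `I` is a maximum critical independent set, `X = I ∪ N(I)`, and
`diadem(G) = corona(G)`, then `α(G[Xᶜ]) = 0`, `Xᶜ = ∅`, and `G` is König-Egerváry. -/
theorem stmt18 (G : SimpleGraph V) (I X : Set V) (hI : IsMaxCritIndep G I)
    (hX : X = I ∪ nbhd G I) (h : diadem G = corona G) :
    alphaOn G Xᶜ = 0 ∧ Xᶜ = ∅ ∧ IsKE G := by
  subst hX
  obtain ⟨hIi, hIc⟩ := isCritIndep_iff.1 hI.1
  have hdiadem : diadem G ⊆ I ∪ nbhd G I := fun _ ⟨_, hJ, hvJ⟩ ↦ hI.subset_union_nbhd hJ.1 hvJ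
  have hcover := union_nbhd_eq_univ_of_corona_subset hIi hIc (h ▸ hdiadem)
  have hXc := compl_empty_iff.2 hcover
  exact ⟨hXc ▸ alphaOn_empty G, hXc, isKE_of_union_nbhd_eq_univ hIi hIc hcover⟩
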